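/- arXiv:1601.02297 — 2 statements merged into one kernel-verified Lean document; each statement's English description precedes it below -/
import Mathlib

section
/- Let \gamma > 0, d \geq 2, and define \lambda_n(\gamma,d) = \sum_{i=1}^d i \gamma^i \binom{d}{i}\binom{n-1}{i-1} + \gamma \sum_{i=1}^{d-1} (d-i)\gamma^i \binom{d}{i}\binom{n-1}{i-1} and \mu_n(\gamma,d) = \sum_{i=1}^d i \gamma^i \binom{d}{i}\binom{n-1}{i-1}. Then \lim_{n\to\infty} (\lambda_n(\gamma,d)/\mu_n(\gamma,d))^n = e^{d-1}. -/
/-!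
Write `λ_n = μ_n + γ S_n`. Since `binom(n-1, k) ~ n^k / k!`, the sums `μ_n` and `S_n` are dominated
by their top terms: `μ_n ~ d γ^d n^(d-1) / (d-1)!` and `S_n ~ d γ^(d-1) n^(d-2) / (d-2)!`.
Hence `n (λ_n / μ_n - 1) = n γ S_n / μ_n → d - 1`, and `(1 + x_n)^n → e^t` whenever `n x_n → t`.
-/

open Finset

/-- Birth rates of the family `BD(γ,d)`. -/
noncomputable def bdLambda (γ : ℝ) (d n : ℕ) : ℝ :=
  (∑ i ∈ Finset.Icc 1 d, (i : ℝ) * γ ^ i * (d.choose i) * ((n - 1).choose (i - 1)))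
    + γ * ∑ i ∈ Finset.Icc 1 (d - 1),
        ((d : ℝ) - i) * γ ^ i * (d.choose i) * ((n - 1).choose (i - 1))

/-- Death rates of the family `BD(γ,d)`. -/
noncomputable def bdMu (γ : ℝ) (d n : ℕ) : ℝ :=
  ∑ i ∈ Finset.Icc 1 d, (i : ℝ) * γ ^ i * (d.choose i) * ((n - 1).choose (i - 1))

open Filter Topology Asymptotics

lemma tendsto_choose_pred_div_pow (k : ℕ) :
    Tendsto (fun n : ℕ => ((n - 1).choose k : ℝ) / n ^ k) atTop (𝓝 (k.factorial : ℝ)⁻¹) := by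
  rw [← tendsto_add_atTop_iff_nat 1]
  have hchoose : Tendsto (fun n : ℕ => (n.choose k : ℝ) / (n ^ k / k.factorial)) atTop (𝓝 1) := by
    refine (isEquivalent_iff_tendsto_one ?_).1 (isEquivalent_choose k)
    filter_upwards [eventually_gt_atTop 0] with n hn
    positivity
  have hratio : Tendsto (fun n : ℕ => ((n : ℝ) / (n + 1)) ^ k) atTop (𝓝 1) := by
    simpa using (tendsto_natCast_div_add_atTop (1 : ℝ)).pow k
  have hlim : Tendsto (fun n : ℕ => (n.choose k : ℝ) / (n ^ k / k.factorial) * ((n : ℝ) / (n + 1)) ^ k)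
      atTop (𝓝 1) := by
    simpa using hchoose.mul hratio
  refine (one_div (k.factorial : ℝ) ▸ hlim.div_const (k.factorial : ℝ)).congr' ?_
  filter_upwards [eventually_gt_atTop 0] with n hn
  simp only [Nat.add_sub_cancel, Nat.cast_add, Nat.cast_one, div_pow]
  field_simp

lemma tendsto_choose_pred_div_pow_of_lt {k m : ℕ} (hkm : k < m) :
    Tendsto (fun n : ℕ => ((n - 1).choose k : ℝ) / n ^ m) atTop (𝓝 0) := by
  have hinv : Tendsto (fun n : ℕ => ((n : ℝ)⁻¹) ^ (m - k)) atTop (𝓝 0) := by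
    simpa [zero_pow (Nat.sub_ne_zero_of_lt hkm)] using
      ((tendsto_inv_atTop_zero (𝕜 := ℝ)).comp tendsto_natCast_atTop_atTop).pow (m - k)
  have hlim := (tendsto_choose_pred_div_pow k).mul hinv
  rw [mul_zero] at hlim
  refine hlim.congr' ?_
  filter_upwards [eventually_gt_atTop 0] with n hn
  rw [inv_pow, ← div_eq_mul_inv, div_div, ← pow_add, Nat.add_sub_cancel' hkm.le]

lemma tendsto_sum_mul_choose_pred_div_pow (c : ℕ → ℝ) {m : ℕ} (hm : 1 ≤ m) :
    Tendsto (fun n : ℕ => (∑ i ∈ Icc 1 m, c i * ((n - 1).choose (i - 1) : ℝ)) / n ^ (m - 1))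
      atTop (𝓝 (c m / (m - 1).factorial)) := by
  have hterm : ∀ i ∈ Icc 1 m, Tendsto (fun n : ℕ => c i * ((n - 1).choose (i - 1) : ℝ) / n ^ (m - 1))
      atTop (𝓝 (if i = m then c m / (m - 1).factorial else 0)) := by
    intro i hi
    simp_rw [mul_div_assoc]
    split_ifs with him
    · subst him
      exact (tendsto_choose_pred_div_pow (i - 1)).const_mul (c i)
    · simpa using (tendsto_choose_pred_div_pow_of_lt (by grind : i - 1 < m - 1)).const_mul (c i)
  simpa [Finset.sum_div, hm] using tendsto_finsetSum _ hterm

noncomputable def bdSurplus (γ : ℝ) (d n : ℕ) : ℝ :=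
  ∑ i ∈ Icc 1 (d - 1), ((d : ℝ) - i) * γ ^ i * (d.choose i) * ((n - 1).choose (i - 1))

lemma bdLambda_eq_bdMu_add (γ : ℝ) (d n : ℕ) :
    bdLambda γ d n = bdMu γ d n + γ * bdSurplus γ d n :=
  rfl

lemma bdMu_pos {γ : ℝ} (hγ : 0 < γ) {d : ℕ} (hd : 1 ≤ d) (n : ℕ) : 0 < bdMu γ d n := by
  refine Finset.sum_pos' (fun i _ => by positivity) ⟨1, Finset.mem_Icc.2 ⟨le_rfl, hd⟩, ?_⟩
  simp only [Nat.choose_one_right, Nat.sub_self, Nat.choose_zero_right]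
  positivity

lemma tendsto_bdMu_div_pow (γ : ℝ) {d : ℕ} (hd : 1 ≤ d) :
    Tendsto (fun n : ℕ => bdMu γ d n / n ^ (d - 1)) atTop
      (𝓝 (d * γ ^ d / (d - 1).factorial)) := by
  simpa [bdMu] using tendsto_sum_mul_choose_pred_div_pow (fun i => (i : ℝ) * γ ^ i * d.choose i) hd

lemma tendsto_bdSurplus_div_pow (γ : ℝ) {d : ℕ} (hd : 2 ≤ d) :
    Tendsto (fun n : ℕ => bdSurplus γ d n / n ^ (d - 2)) atTop
      (𝓝 (d * γ ^ (d - 1) / (d - 2).factorial)) := by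
  obtain ⟨k, rfl⟩ : ∃ k, d = k + 2 := ⟨d - 2, by omega⟩
  convert tendsto_sum_mul_choose_pred_div_pow
    (fun i => ((k + 2 : ℕ) - i : ℝ) * γ ^ i * (k + 2).choose i) (m := k + 1) (by omega) using 2
  · rfl
  · simp only [Nat.choose_succ_self_right, Nat.add_sub_cancel]
    push_cast
    ring

lemma tendsto_nat_mul_bdSurplus_div_bdMu {γ : ℝ} (hγ : 0 < γ) {d : ℕ} (hd : 2 ≤ d) :
    Tendsto (fun n : ℕ => n * (γ * bdSurplus γ d n / bdMu γ d n)) atTop (𝓝 (d - 1)) := by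
  have hlim := ((tendsto_bdSurplus_div_pow γ hd).const_mul γ).div
    (tendsto_bdMu_div_pow γ (d := d) (by omega)) (by have := hγ.ne'; positivity)
  obtain ⟨k, rfl⟩ : ∃ k, d = k + 2 := ⟨d - 2, by omega⟩
  simp only [Nat.add_sub_cancel, Nat.add_succ_sub_one] at hlim
  convert hlim.congr' ?_ using 2
  · rw [Nat.factorial_succ]
    push_cast
    field_simp
    ring
  · filter_upwards [eventually_gt_atTop 0] with n hn
    have := (bdMu_pos hγ (by omega : 1 ≤ k + 2) n).ne'
    simp only [Pi.div_apply]
    field_simp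
    ring

/-- `lim_{n→∞} (λ_n(γ,d)/μ_n(γ,d))^n = e^{d-1}` for `γ > 0`, `d ≥ 2`. -/
theorem stmt_5 (γ : ℝ) (hγ : 0 < γ) (d : ℕ) (hd : 2 ≤ d) :
    Filter.Tendsto (fun n : ℕ => (bdLambda γ d n / bdMu γ d n) ^ n)
      Filter.atTop (nhds (Real.exp ((d : ℝ) - 1))) := by
  refine (Real.tendsto_one_add_pow_exp_of_tendsto
    (tendsto_nat_mul_bdSurplus_div_bdMu hγ hd)).congr fun n => ?_
  rw [bdLambda_eq_bdMu_add, add_div, div_self (bdMu_pos hγ (by omega) n).ne']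
end

section
/- For d \geq 2 and n \geq 1, the function k \mapsto p_n(d,k) = (f(2k)+1)/(f(2k)+2) is (weakly) increasing in k on (0,\infty), where f(k) = (\sum_{i=1}^{d-1}(d-i) k^{i+1} \binom{d}{i}\binom{n-1}{i-1}) / (\sum_{i=1}^{d} i k^{i} \binom{d}{i}\binom{n-1}{i-1}). -/
private lemma choose_log_concave (m a b : ℕ) (hab : a ≤ b) :
    m.choose a * m.choose (b + 1) ≤ m.choose (a + 1) * m.choose b := by
  have h1 := Nat.choose_succ_right_eq m a
  have h2 := Nat.choose_succ_right_eq m b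
  have key : m.choose a * m.choose (b + 1) * ((a + 1) * (b + 1))
      ≤ m.choose (a + 1) * m.choose b * ((a + 1) * (b + 1)) := by
    calc m.choose a * m.choose (b + 1) * ((a + 1) * (b + 1))
        = m.choose a * (m.choose (b + 1) * (b + 1)) * (a + 1) := by ring
      _ = m.choose a * (m.choose b * (m - b)) * (a + 1) := by rw [h2]
      _ = m.choose a * m.choose b * ((m - b) * (a + 1)) := by ring
      _ ≤ m.choose a * m.choose b * ((m - a) * (b + 1)) := by
          exact Nat.mul_le_mul_left _
            (Nat.mul_le_mul (Nat.sub_le_sub_left hab m) (Nat.succ_le_succ hab))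
      _ = m.choose a * (m - a) * (m.choose b * (b + 1)) := by ring
      _ = m.choose (a + 1) * (a + 1) * (m.choose b * (b + 1)) := by rw [h1]
      _ = m.choose (a + 1) * m.choose b * ((a + 1) * (b + 1)) := by ring
  exact Nat.le_of_mul_le_mul_right key (by positivity)

private def Acoef (d n i : ℕ) : ℕ :=
  if i < 2 then 0 else i * d.choose i * (n - 1).choose (i - 2)

private def Bcoef (d n i : ℕ) : ℕ := i * d.choose i * (n - 1).choose (i - 1)

private lemma AB_ineq (d n : ℕ) {i j : ℕ} (hij : i ≤ j) :
    Acoef d n i * Bcoef d n j ≤ Acoef d n j * Bcoef d n i := by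
  by_cases hi : i < 2
  · simp [Acoef, hi]
  · have hj : ¬ j < 2 := by omega
    simp only [Acoef, hi, hj, if_false, Bcoef]
    have h := choose_log_concave (n - 1) (i - 2) (j - 2) (by omega)
    rw [show i - 2 + 1 = i - 1 by omega, show j - 2 + 1 = j - 1 by omega] at h
    calc i * d.choose i * (n - 1).choose (i - 2) * (j * d.choose j * (n - 1).choose (j - 1))
        = i * d.choose i * (j * d.choose j) * ((n - 1).choose (i - 2) * (n - 1).choose (j - 1)) := by
          ring
      _ ≤ i * d.choose i * (j * d.choose j) * ((n - 1).choose (i - 1) * (n - 1).choose (j - 2)) :=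
          Nat.mul_le_mul_left _ h
      _ = j * d.choose j * (n - 1).choose (j - 2) * (i * d.choose i * (n - 1).choose (i - 1)) := by
          ring

private lemma cross_ineq (S : Finset ℕ) (A B : ℕ → ℝ)
    (hAB : ∀ i j : ℕ, i ≤ j → A i * B j ≤ A j * B i)
    (x y : ℝ) (hx : 0 < x) (hxy : x ≤ y) :
    (∑ i ∈ S, A i * x ^ i) * (∑ j ∈ S, B j * y ^ j)
      ≤ (∑ j ∈ S, A j * y ^ j) * (∑ i ∈ S, B i * x ^ i) := by
  set g : ℕ → ℕ → ℝ := fun i j => (A j * B i - A i * B j) * (x ^ i * y ^ j) with hg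
  have main : ∀ i j : ℕ, i ≤ j → 0 ≤ g i j + g j i := by
    intro i j hij
    have h1 : 0 ≤ A j * B i - A i * B j := by linarith [hAB i j hij]
    have h2 : x ^ j * y ^ i ≤ x ^ i * y ^ j := by
      obtain ⟨e, rfl⟩ := Nat.exists_eq_add_of_le hij
      have he : x ^ e ≤ y ^ e := pow_le_pow_left₀ hx.le hxy e
      have hy : 0 < y := lt_of_lt_of_le hx hxy
      have hxi : (0:ℝ) ≤ x ^ i * y ^ i := by positivity
      calc x ^ (i + e) * y ^ i = x ^ i * y ^ i * x ^ e := by rw [pow_add]; ring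
        _ ≤ x ^ i * y ^ i * y ^ e := mul_le_mul_of_nonneg_left he hxi
        _ = x ^ i * y ^ (i + e) := by rw [pow_add]; ring
    have := mul_nonneg h1 (sub_nonneg.2 h2)
    simp only [hg]
    nlinarith [this]
  have hterm : ∀ i j : ℕ, 0 ≤ g i j + g j i := by
    intro i j
    rcases le_total i j with h | h
    · exact main i j h
    · have := main j i h; linarith
  have hswap : ∑ i ∈ S, ∑ j ∈ S, g j i = ∑ i ∈ S, ∑ j ∈ S, g i j := Finset.sum_comm
  have h2 : 0 ≤ ∑ i ∈ S, ∑ j ∈ S, (g i j + g j i) :=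
    Finset.sum_nonneg fun i _ => Finset.sum_nonneg fun j _ => hterm i j
  have h3 : ∑ i ∈ S, ∑ j ∈ S, (g i j + g j i)
      = (∑ i ∈ S, ∑ j ∈ S, g i j) + (∑ i ∈ S, ∑ j ∈ S, g j i) := by
    rw [← Finset.sum_add_distrib]
    exact Finset.sum_congr rfl fun i _ => Finset.sum_add_distrib
  have key : 0 ≤ ∑ i ∈ S, ∑ j ∈ S, g i j := by
    rw [h3, hswap] at h2; linarith
  have e1 : (∑ j ∈ S, A j * y ^ j) * (∑ i ∈ S, B i * x ^ i)
      = ∑ i ∈ S, ∑ j ∈ S, (A j * y ^ j) * (B i * x ^ i) := by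
    rw [Finset.sum_mul_sum]; exact Finset.sum_comm
  have e2 : (∑ i ∈ S, A i * x ^ i) * (∑ j ∈ S, B j * y ^ j)
      = ∑ i ∈ S, ∑ j ∈ S, (A i * x ^ i) * (B j * y ^ j) := Finset.sum_mul_sum S S _ _
  have expand : (∑ j ∈ S, A j * y ^ j) * (∑ i ∈ S, B i * x ^ i)
      - (∑ i ∈ S, A i * x ^ i) * (∑ j ∈ S, B j * y ^ j)
      = ∑ i ∈ S, ∑ j ∈ S, g i j := by
    rw [e1, e2, ← Finset.sum_sub_distrib]
    refine Finset.sum_congr rfl fun i _ => ?_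
    rw [← Finset.sum_sub_distrib]
    refine Finset.sum_congr rfl fun j _ => ?_
    simp only [hg]; ring
  linarith [expand ▸ key]

private lemma N_rw (d n : ℕ) (hd : 2 ≤ d) (k : ℝ) :
    (∑ i ∈ Finset.Icc 1 (d - 1),
        ((d : ℝ) - i) * k ^ (i + 1) * (d.choose i) * ((n - 1).choose (i - 1)))
      = ∑ i ∈ Finset.Icc 1 d, (Acoef d n i : ℝ) * k ^ i := by
  have hset : Finset.Icc 1 d = insert 1 (Finset.Icc 2 d) := by
    ext a; simp [Finset.mem_Icc, Finset.mem_insert]; omega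
  rw [hset, Finset.sum_insert (by simp)]
  have hA1 : (Acoef d n 1 : ℝ) = 0 := by simp [Acoef]
  rw [hA1, zero_mul, zero_add]
  have hmap : Finset.Icc 2 d = Finset.map (addRightEmbedding 1) (Finset.Icc 1 (d - 1)) := by
    rw [Finset.map_add_right_Icc]
    congr 1
    omega
  rw [hmap, Finset.sum_map]
  refine Finset.sum_congr rfl fun i hi => ?_
  simp only [Finset.mem_Icc] at hi
  have hid : i ≤ d := by omega
  have hA : Acoef d n (i + 1) = d.choose i * (d - i) * (n - 1).choose (i - 1) := by
    simp only [Acoef, show ¬ i + 1 < 2 by omega, if_false,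
      show i + 1 - 2 = i - 1 by omega]
    rw [show (i + 1) * d.choose (i + 1) * (n - 1).choose (i - 1)
        = d.choose (i + 1) * (i + 1) * (n - 1).choose (i - 1) by ring,
      Nat.choose_succ_right_eq]
  simp only [addRightEmbedding, Function.Embedding.coeFn_mk]
  rw [hA]
  push_cast [Nat.cast_sub hid]
  ring

private lemma D_rw (d n : ℕ) (k : ℝ) :
    (∑ i ∈ Finset.Icc 1 d, (i : ℝ) * k ^ i * (d.choose i) * ((n - 1).choose (i - 1)))
      = ∑ i ∈ Finset.Icc 1 d, (Bcoef d n i : ℝ) * k ^ i := by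
  refine Finset.sum_congr rfl fun i _ => ?_
  simp only [Bcoef]
  push_cast
  ring

private lemma D_pos (d n : ℕ) (hd : 2 ≤ d) {k : ℝ} (hk : 0 < k) :
    0 < ∑ i ∈ Finset.Icc 1 d, (i : ℝ) * k ^ i * (d.choose i) * ((n - 1).choose (i - 1)) := by
  refine Finset.sum_pos' (fun i _ => by positivity) ⟨1, ?_, ?_⟩
  · simp [Finset.mem_Icc]; omega
  · simp only [Nat.cast_one, one_mul, pow_one, Nat.choose_one_right, Nat.sub_self,
      Nat.choose_zero_right, Nat.cast_one, mul_one]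
    have : (0:ℝ) < d := by exact_mod_cast (by omega : 0 < d)
    positivity

private lemma N_nonneg (d n : ℕ) {k : ℝ} (hk : 0 < k) :
    0 ≤ ∑ i ∈ Finset.Icc 1 (d - 1),
        ((d : ℝ) - i) * k ^ (i + 1) * (d.choose i) * ((n - 1).choose (i - 1)) := by
  refine Finset.sum_nonneg fun i hi => ?_
  simp only [Finset.mem_Icc] at hi
  have : (i : ℝ) ≤ d := by exact_mod_cast (by omega : i ≤ d)
  have h1 : (0:ℝ) ≤ (d : ℝ) - i := by linarith
  positivity

/-- For `d ≥ 2`, `n ≥ 1`, the map `k ↦ p_n(d,k) = (f(2k)+1)/(f(2k)+2)` is weakly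
increasing on `(0,∞)`, where `f` is the ratio of weighted zero/nonzero component
counts. -/
theorem stmt_10 (d n : ℕ) (hd : 2 ≤ d) (hn : 1 ≤ n)
    (f : ℝ → ℝ)
    (hf : ∀ k : ℝ, f k =
      (∑ i ∈ Finset.Icc 1 (d - 1),
          ((d : ℝ) - i) * k ^ (i + 1) * (d.choose i) * ((n - 1).choose (i - 1))) /
      (∑ i ∈ Finset.Icc 1 d,
          (i : ℝ) * k ^ i * (d.choose i) * ((n - 1).choose (i - 1)))) :
    MonotoneOn (fun k : ℝ => (f (2 * k) + 1) / (f (2 * k) + 2)) (Set.Ioi 0) := by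
  intro k1 hk1 k2 hk2 h12
  simp only [Set.mem_Ioi] at hk1 hk2
  set x := 2 * k1 with hxdef
  set y := 2 * k2 with hydef
  have hx : 0 < x := by positivity
  have hy : 0 < y := by positivity
  have hxy : x ≤ y := by simp only [hxdef, hydef]; linarith
  have hfx0 : 0 ≤ f x := by
    rw [hf x]; exact div_nonneg (N_nonneg d n hx) (D_pos d n hd hx).le
  have hfxy : f x ≤ f y := by
    rw [hf x, hf y, div_le_div_iff₀ (D_pos d n hd hx) (D_pos d n hd hy)]
    rw [N_rw d n hd x, N_rw d n hd y, D_rw d n x, D_rw d n y]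
    exact cross_ineq (Finset.Icc 1 d) (fun i => (Acoef d n i : ℝ)) (fun i => (Bcoef d n i : ℝ))
      (fun i j hij => by
        show ((Acoef d n i : ℝ)) * (Bcoef d n j : ℝ) ≤ (Acoef d n j : ℝ) * (Bcoef d n i : ℝ)
        exact_mod_cast AB_ineq d n hij) x y hx hxy
  have h1 : (0:ℝ) < f x + 2 := by linarith
  have h2 : (0:ℝ) < f y + 2 := by linarith
  simp only
  rw [div_le_div_iff₀ h1 h2]
  nlinarith
end
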